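/- arXiv:1608.03108 — 2 statements merged into one kernel-verified Lean document; each statement's English description precedes it below -/
import Mathlib

section
/- Assume the closed-loop system is exponentially stable. Then the controller solves the output regulation problem if and only if the discrete-time regulator equations have a solution, i.e. there exists a bounded linear operator Σ : ℂ^q → X × Z such that Σ S = A_e Σ + B_e and C_e Σ + D_e = 0. -/
noncomputable section

open ContinuousLinearMap

variable {X Z U Ud Y W : Type*}
  [NormedAddCommGroup X] [NormedSpace ℂ X]
  [NormedAddCommGroup Z] [NormedSpace ℂ Z]
  [NormedAddCommGroup U] [NormedSpace ℂ U]
  [NormedAddCommGroup Ud] [NormedSpace ℂ Ud]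
  [NormedAddCommGroup Y] [NormedSpace ℂ Y]
  [NormedAddCommGroup W] [NormedSpace ℂ W]

/-- The closed-loop system operator `A_e` on `X × Z`:
`A_e(x,z) = (Ax + BKz, G₂Cx + G₁z + G₂DKz)`. -/
def Ae (A : X →L[ℂ] X) (B : U →L[ℂ] X) (C : X →L[ℂ] Y) (D : U →L[ℂ] Y)
    (G₁ : Z →L[ℂ] Z) (G₂ : Y →L[ℂ] Z) (K : Z →L[ℂ] U) : (X × Z) →L[ℂ] (X × Z) :=
  ((A.comp (fst ℂ X Z)) + ((B.comp K).comp (snd ℂ X Z))).prod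
    ((G₂.comp (C.comp (fst ℂ X Z))) + (G₁.comp (snd ℂ X Z))
      + ((G₂.comp (D.comp K)).comp (snd ℂ X Z)))

/-- The closed-loop input operator `B_e v = (B_d E v, G₂(D_d E v + F v))`. -/
def Be (Bd : Ud →L[ℂ] X) (Dd : Ud →L[ℂ] Y) (E : W →L[ℂ] Ud) (F : W →L[ℂ] Y)
    (G₂ : Y →L[ℂ] Z) : W →L[ℂ] (X × Z) :=
  (Bd.comp E).prod (G₂.comp ((Dd.comp E) + F))

/-- The closed-loop output operator `C_e(x,z) = Cx + DKz`. -/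
def Ce (C : X →L[ℂ] Y) (D : U →L[ℂ] Y) (K : Z →L[ℂ] U) : (X × Z) →L[ℂ] Y :=
  C.comp (fst ℂ X Z) + (D.comp K).comp (snd ℂ X Z)

/-- The closed-loop feedthrough operator `D_e = D_d E + F`. -/
def De (Dd : Ud →L[ℂ] Y) (E : W →L[ℂ] Ud) (F : W →L[ℂ] Y) : W →L[ℂ] Y :=
  (Dd.comp E) + F

/-- The controller `(G₁, G₂, K)` solves the output regulation problem: the closed-loop
system is exponentially stable and the regulation error decays at a uniform exponential
rate for all initial states of the system, the controller and the exosystem. -/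
def SolvesORP (A : X →L[ℂ] X) (B : U →L[ℂ] X) (Bd : Ud →L[ℂ] X)
    (C : X →L[ℂ] Y) (D : U →L[ℂ] Y) (Dd : Ud →L[ℂ] Y)
    (S : W →L[ℂ] W) (E : W →L[ℂ] Ud) (F : W →L[ℂ] Y)
    (G₁ : Z →L[ℂ] Z) (G₂ : Y →L[ℂ] Z) (K : Z →L[ℂ] U) : Prop :=
  (∀ lam ∈ spectrum ℂ (Ae A B C D G₁ G₂ K), ‖lam‖ < 1) ∧
  ∃ M α : ℝ, 0 < M ∧ 0 < α ∧
    ∀ (x₀ : X) (z₀ : Z) (v₀ : W) (v : ℕ → W) (xe : ℕ → X × Z),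
      v 0 = v₀ → (∀ n, v (n + 1) = S (v n)) →
      xe 0 = (x₀, z₀) →
      (∀ n, xe (n + 1) = Ae A B C D G₁ G₂ K (xe n) + Be Bd Dd E F G₂ (v n)) →
      ∀ n : ℕ, ‖Ce C D K (xe n) + De Dd E F (v n)‖
        ≤ M * Real.exp (-(α * n)) * (‖x₀‖ + ‖z₀‖ + ‖v₀‖)

/-- The controller `(G₁, G₂, K)` solves the robust output regulation problem: it solves
the output regulation problem and retains exponential decay of the regulation error for
every perturbation of the operators `(A, B, B_d, C, D, D_d, E, F)` that preserves the
exponential stability of the closed-loop system. -/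
def SolvesRORP (A : X →L[ℂ] X) (B : U →L[ℂ] X) (Bd : Ud →L[ℂ] X)
    (C : X →L[ℂ] Y) (D : U →L[ℂ] Y) (Dd : Ud →L[ℂ] Y)
    (S : W →L[ℂ] W) (E : W →L[ℂ] Ud) (F : W →L[ℂ] Y)
    (G₁ : Z →L[ℂ] Z) (G₂ : Y →L[ℂ] Z) (K : Z →L[ℂ] U) : Prop :=
  SolvesORP A B Bd C D Dd S E F G₁ G₂ K ∧
  ∀ (A' : X →L[ℂ] X) (B' : U →L[ℂ] X) (Bd' : Ud →L[ℂ] X)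
    (C' : X →L[ℂ] Y) (D' : U →L[ℂ] Y) (Dd' : Ud →L[ℂ] Y)
    (E' : W →L[ℂ] Ud) (F' : W →L[ℂ] Y),
    (∀ lam ∈ spectrum ℂ (Ae A' B' C' D' G₁ G₂ K), ‖lam‖ < 1) →
    ∃ M α : ℝ, 0 < M ∧ 0 < α ∧
      ∀ (x₀ : X) (z₀ : Z) (v₀ : W) (v : ℕ → W) (xe : ℕ → X × Z),
        v 0 = v₀ → (∀ n, v (n + 1) = S (v n)) →
        xe 0 = (x₀, z₀) →
        (∀ n, xe (n + 1) = Ae A' B' C' D' G₁ G₂ K (xe n) + Be Bd' Dd' E' F' G₂ (v n)) →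
        ∀ n : ℕ, ‖Ce C' D' K (xe n) + De Dd' E' F' (v n)‖
          ≤ M * Real.exp (-(α * n)) * (‖x₀‖ + ‖z₀‖ + ‖v₀‖)

/-!
If `Σ` solves the regulator equations, then along every closed-loop trajectory
`x_n - Σ v_n = A_eⁿ (x_0 - Σ v_0)`, so the error is `e_n = C_e A_eⁿ (x_0 - Σ v_0)`; it decays
exponentially because, by Gelfand's formula, `‖A_eⁿ‖` does once the spectrum of `A_e` lies in
the open unit disc.

Conversely, every eigenvalue `μ_k` of the exosystem lies on the unit circle, hence in the
resolvent set of `A_e`, so the Sylvester equation `Σ S = A_e Σ + B_e` is solved by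
`Σ e_k = R(μ_k, A_e) B_e e_k`. The trajectory started at `Σ v_0` stays at `Σ Sⁿ v_0`, with error
`(C_e Σ + D_e) Sⁿ v_0`; for `v_0 = e_k` this has constant norm, so its decay forces
`C_e Σ + D_e = 0`.
-/

open Filter Topology

theorem spectralRadius_lt_one_of_forall_norm_lt_one {A : Type*} [NormedRing A]
    [NormedAlgebra ℂ A] [CompleteSpace A] {a : A} (h : ∀ z ∈ spectrum ℂ a, ‖z‖ < 1) :
    spectralRadius ℂ a < 1 := by
  rcases (spectrum ℂ a).eq_empty_or_nonempty with hσ | hσ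
  · simp [spectralRadius, hσ]
  · exact spectrum.spectralRadius_lt_of_forall_lt_of_nonempty hσ fun z hz => by
      exact_mod_cast h z hz

theorem exists_norm_pow_le_mul_exp_neg {A : Type*} [NormedRing A] [NormedAlgebra ℂ A]
    [CompleteSpace A] {a : A} (h : ∀ z ∈ spectrum ℂ a, ‖z‖ < 1) :
    ∃ M α : ℝ, 0 < M ∧ 0 < α ∧ ∀ n : ℕ, ‖a ^ n‖ ≤ M * Real.exp (-(α * n)) := by
  obtain ⟨r, hρr, hr1⟩ :=
    ENNReal.lt_iff_exists_nnreal_btwn.mp (spectralRadius_lt_one_of_forall_norm_lt_one h)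
  have hr0 : (0 : ℝ) < r := by exact_mod_cast zero_le.trans_lt hρr
  have hr1 : (r : ℝ) < 1 := by exact_mod_cast hr1
  -- Gelfand's formula: eventually `‖a ^ n‖ ^ (1 / n) < r`.
  have hO : (fun n : ℕ => a ^ n) =O[atTop] fun n => (r : ℝ) ^ n := by
    refine Asymptotics.IsBigO.of_bound 1 ?_
    filter_upwards [(spectrum.pow_nnnorm_pow_one_div_tendsto_nhds_spectralRadius a)
      |>.eventually_lt_const hρr, eventually_gt_atTop 0] with n hn hn0
    rw [one_div, ENNReal.rpow_inv_lt_iff (by positivity), ENNReal.rpow_natCast] at hn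
    rw [one_mul, Real.norm_of_nonneg (by positivity)]
    exact_mod_cast hn.le
  obtain ⟨M, hM⟩ := (Asymptotics.isBigO_nat_atTop_iff fun n hn =>
    absurd hn (pow_pos hr0 n).ne').mp hO
  refine ⟨max M 1, -Real.log r, by positivity, neg_pos.mpr (Real.log_neg hr0 hr1), fun n => ?_⟩
  have hexp : Real.exp (-(-Real.log r * n)) = (r : ℝ) ^ n := by
    rw [neg_mul, neg_neg, mul_comm, Real.exp_nat_mul, Real.exp_log hr0]
  calc ‖a ^ n‖ ≤ M * (r : ℝ) ^ n := by simpa [abs_of_pos hr0] using hM n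
    _ ≤ max M 1 * Real.exp (-(-Real.log r * n)) := by rw [hexp]; gcongr; exact le_max_left _ _

theorem tendsto_mul_exp_neg_mul_natCast (M R : ℝ) {α : ℝ} (hα : 0 < α) :
    Tendsto (fun n : ℕ => M * Real.exp (-(α * n)) * R) atTop (𝓝 0) := by
  have h : Tendsto (fun n : ℕ => Real.exp (-(α * n))) atTop (𝓝 0) :=
    Real.tendsto_exp_neg_atTop_nhds_zero.comp
      (tendsto_natCast_atTop_atTop.const_mul_atTop hα)
  simpa using (h.const_mul M).mul_const R

section Diagonal

variable {𝕜 E F : Type*} [NormedField 𝕜]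
  [NormedAddCommGroup E] [NormedSpace 𝕜 E] [NormedAddCommGroup F] [NormedSpace 𝕜 F]
  {ι : Type*} [DecidableEq ι]

def diagCLM (μ : ι → 𝕜) : (ι → 𝕜) →L[𝕜] (ι → 𝕜) :=
  ContinuousLinearMap.pi fun k => μ k • ContinuousLinearMap.proj k

theorem diagCLM_single (μ : ι → 𝕜) (k : ι) (c : 𝕜) :
    diagCLM μ (Pi.single k c) = μ k • Pi.single k c := by
  ext j
  rcases eq_or_ne j k with rfl | hj <;> simp [diagCLM, *]

theorem diagCLM_pow_single (μ : ι → 𝕜) (k : ι) (c : 𝕜) (n : ℕ) :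
    (diagCLM μ ^ n) (Pi.single k c) = μ k ^ n • Pi.single k c := by
  induction n with
  | zero => simp
  | succ n ih => rw [pow_succ', mul_apply_eq_comp, ih, map_smul, diagCLM_single,
      smul_smul, pow_succ]

theorem ContinuousLinearMap.pi_ext [Finite ι] {f g : (ι → 𝕜) →L[𝕜] F}
    (h : ∀ k c, f (Pi.single k c) = g (Pi.single k c)) : f = g :=
  ContinuousLinearMap.coe_injective (LinearMap.pi_ext h)

theorem smul_resolvent_apply_sub {T : E →L[𝕜] E} {z : 𝕜} (hz : z ∉ spectrum 𝕜 T) (y : E) :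
    z • resolvent T z y - T (resolvent T z y) = y := by
  have h := congr($(Ring.mul_inverse_cancel _ (spectrum.notMem_iff.mp hz)) y)
  simpa [resolvent, Algebra.algebraMap_eq_smul_one] using h

theorem exists_comp_diagCLM_eq_comp_add [Fintype ι] {μ : ι → 𝕜} {T : E →L[𝕜] E}
    (hμ : ∀ k, μ k ∉ spectrum 𝕜 T) (B : (ι → 𝕜) →L[𝕜] E) :
    ∃ Sig : (ι → 𝕜) →L[𝕜] E, Sig.comp (diagCLM μ) = T.comp Sig + B := by
  let w k := resolvent T (μ k) (B (Pi.single k 1))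
  let Sig : (ι → 𝕜) →L[𝕜] E := ∑ j, (ContinuousLinearMap.proj j).smulRight (w j)
  have hSig : ∀ k (c : 𝕜), Sig (Pi.single k c) = c • w k := by
    intro k c
    simp [Sig, Pi.single_apply]
  refine ⟨Sig, ContinuousLinearMap.pi_ext fun k c => ?_⟩
  have hB : B (Pi.single k c) = c • B (Pi.single k 1) := by
    rw [← map_smul, ← Pi.single_smul, smul_eq_mul, mul_one]
  simp only [comp_apply, add_apply, diagCLM_single, map_smul, hSig, hB, smul_smul]
  rw [mul_comm, ← smul_smul, ← smul_resolvent_apply_sub (hμ k) (B (Pi.single k 1)), smul_sub]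
  abel

theorem eq_zero_of_tendsto_apply_diagCLM_pow [Finite ι] {μ : ι → 𝕜} (hμ : ∀ k, ‖μ k‖ = 1)
    {L : (ι → 𝕜) →L[𝕜] F} (h : ∀ v, Tendsto (fun n => L ((diagCLM μ ^ n) v)) atTop (𝓝 0)) :
    L = 0 := by
  refine ContinuousLinearMap.pi_ext fun k c => ?_
  have hconst : Tendsto (fun _ : ℕ => ‖L (Pi.single k c)‖) atTop (𝓝 0) := by
    simpa only [diagCLM_pow_single, map_smul, norm_smul, norm_pow, hμ k, one_pow, one_mul,
      norm_zero] using (h (Pi.single k c)).norm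
  simpa using tendsto_nhds_unique tendsto_const_nhds hconst

end Diagonal

section Trajectory

variable {𝕜 E V F : Type*} [NormedField 𝕜]
  [NormedAddCommGroup E] [NormedSpace 𝕜 E] [NormedAddCommGroup V] [NormedSpace 𝕜 V]
  [NormedAddCommGroup F] [NormedSpace 𝕜 F]
  {T : E →L[𝕜] E} {B : V →L[𝕜] E} {S : V →L[𝕜] V} {Sig : V →L[𝕜] E}

theorem trajectory_sub_eq_pow_apply (hSig : Sig.comp S = T.comp Sig + B) {v : ℕ → V}
    {x : ℕ → E} (hv : ∀ n, v (n + 1) = S (v n)) (hx : ∀ n, x (n + 1) = T (x n) + B (v n))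
    (n : ℕ) : x n - Sig (v n) = (T ^ n) (x 0 - Sig (v 0)) := by
  induction n with
  | zero => simp
  | succ n ih =>
    rw [hx, hv, ← comp_apply, hSig, pow_succ', mul_apply_eq_comp, ← ih, add_apply,
      comp_apply, map_sub]
    abel

theorem trajectory_output_eq_pow_apply (hSig : Sig.comp S = T.comp Sig + B)
    {C : E →L[𝕜] F} {D : V →L[𝕜] F} (hout : C.comp Sig + D = 0) {v : ℕ → V}
    {x : ℕ → E} (hv : ∀ n, v (n + 1) = S (v n)) (hx : ∀ n, x (n + 1) = T (x n) + B (v n))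
    (n : ℕ) : C (x n) + D (v n) = C ((T ^ n) (x 0 - Sig (v 0))) := by
  have h := congr($hout (v n))
  rw [add_apply, comp_apply, zero_apply] at h
  rw [← trajectory_sub_eq_pow_apply hSig hv hx, map_sub, eq_neg_of_add_eq_zero_right h,
    sub_eq_add_neg]

end Trajectory

theorem exists_norm_output_le_of_regulator_equations {E V F : Type*}
    [NormedAddCommGroup E] [NormedSpace ℂ E] [CompleteSpace E]
    [NormedAddCommGroup V] [NormedSpace ℂ V] [NormedAddCommGroup F] [NormedSpace ℂ F]
    {T : E →L[ℂ] E} {B : V →L[ℂ] E} {S : V →L[ℂ] V} {Sig : V →L[ℂ] E} {C : E →L[ℂ] F}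
    {D : V →L[ℂ] F} (hT : ∀ z ∈ spectrum ℂ T, ‖z‖ < 1) (hSig : Sig.comp S = T.comp Sig + B)
    (hout : C.comp Sig + D = 0) :
    ∃ M α : ℝ, 0 < M ∧ 0 < α ∧ ∀ (v : ℕ → V) (x : ℕ → E), (∀ n, v (n + 1) = S (v n)) →
      (∀ n, x (n + 1) = T (x n) + B (v n)) →
      ∀ n : ℕ, ‖C (x n) + D (v n)‖ ≤ M * Real.exp (-(α * n)) * (‖x 0‖ + ‖v 0‖) := by
  obtain ⟨M, α, hM, hα, hpow⟩ := exists_norm_pow_le_mul_exp_neg hT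
  refine ⟨(‖C‖ + 1) * M * (‖Sig‖ + 1), α, by positivity, hα, fun v x hv hx n => ?_⟩
  have hinit : ‖x 0 - Sig (v 0)‖ ≤ (‖Sig‖ + 1) * (‖x 0‖ + ‖v 0‖) := by
    calc ‖x 0 - Sig (v 0)‖ ≤ ‖x 0‖ + ‖Sig‖ * ‖v 0‖ :=
          (norm_sub_le _ _).trans (by gcongr; exact Sig.le_opNorm _)
      _ ≤ (‖Sig‖ + 1) * (‖x 0‖ + ‖v 0‖) := by
          nlinarith [mul_nonneg (norm_nonneg Sig) (norm_nonneg (x 0)), norm_nonneg (v 0)]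
  rw [trajectory_output_eq_pow_apply hSig hout hv hx]
  calc ‖C ((T ^ n) (x 0 - Sig (v 0)))‖ ≤ ‖C‖ * (‖T ^ n‖ * ‖x 0 - Sig (v 0)‖) :=
        (C.le_opNorm _).trans (by gcongr; exact (T ^ n).le_opNorm _)
    _ ≤ (‖C‖ + 1) * (M * Real.exp (-(α * n)) * ((‖Sig‖ + 1) * (‖x 0‖ + ‖v 0‖))) := by
        gcongr
        · linarith
        · exact hpow n
    _ = _ := by ring

theorem orp_iff_regulator_equations_general
    {X Z U Ud Y : Type*}
    [NormedAddCommGroup X] [NormedSpace ℂ X] [CompleteSpace X]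
    [NormedAddCommGroup Z] [NormedSpace ℂ Z] [CompleteSpace Z]
    [NormedAddCommGroup U] [InnerProductSpace ℂ U]
    [NormedAddCommGroup Ud] [InnerProductSpace ℂ Ud]
    [NormedAddCommGroup Y] [InnerProductSpace ℂ Y]
    (A : X →L[ℂ] X) (B : U →L[ℂ] X) (Bd : Ud →L[ℂ] X)
    (C : X →L[ℂ] Y) (D : U →L[ℂ] Y) (Dd : Ud →L[ℂ] Y)
    (q : ℕ) (μ : Fin q → ℂ) (hμ : ∀ k, ‖μ k‖ = 1)
    (E : (Fin q → ℂ) →L[ℂ] Ud) (F : (Fin q → ℂ) →L[ℂ] Y)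
    (G₁ : Z →L[ℂ] Z) (G₂ : Y →L[ℂ] Z) (K : Z →L[ℂ] U)
    (hCL : ∀ lam ∈ spectrum ℂ (Ae A B C D G₁ G₂ K), ‖lam‖ < 1) :
    SolvesORP A B Bd C D Dd
        (ContinuousLinearMap.pi fun k => μ k • ContinuousLinearMap.proj k) E F G₁ G₂ K
      ↔ ∃ Sig : (Fin q → ℂ) →L[ℂ] X × Z,
          Sig.comp (ContinuousLinearMap.pi fun k => μ k • ContinuousLinearMap.proj k)
              = (Ae A B C D G₁ G₂ K).comp Sig + Be Bd Dd E F G₂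
          ∧ (Ce C D K).comp Sig + De Dd E F = 0 := by
  have hres : ∀ k, μ k ∉ spectrum ℂ (Ae A B C D G₁ G₂ K) := fun k hk => (hCL _ hk).ne (hμ k)
  constructor
  · rintro ⟨-, M, α, -, hα, hdecay⟩
    obtain ⟨Sig, hSig⟩ := exists_comp_diagCLM_eq_comp_add hres (Be Bd Dd E F G₂)
    refine ⟨Sig, hSig, eq_zero_of_tendsto_apply_diagCLM_pow hμ fun v₀ => ?_⟩
    let v n := (diagCLM μ ^ n) v₀
    have hv : ∀ n, v (n + 1) = diagCLM μ (v n) := fun n => by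
      simp only [v, pow_succ', mul_apply_eq_comp]
    have hx : ∀ n, Sig (v (n + 1)) = Ae A B C D G₁ G₂ K (Sig (v n)) + Be Bd Dd E F G₂ (v n) :=
      fun n => by rw [hv, ← comp_apply Sig, hSig, add_apply, comp_apply]
    exact squeeze_zero_norm (hdecay (Sig v₀).1 (Sig v₀).2 v₀ v (fun n => Sig (v n))
      (by simp [v]) hv (by simp [v]) hx) (tendsto_mul_exp_neg_mul_natCast _ _ hα)
  · rintro ⟨Sig, hSig, hout⟩
    obtain ⟨M, α, hM, hα, hbound⟩ := exists_norm_output_le_of_regulator_equations hCL hSig hout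
    refine ⟨hCL, M, α, hM, hα, fun x₀ z₀ v₀ v xe hv0 hv hxe0 hxe n =>
      (hbound v xe hv hxe n).trans ?_⟩
    rw [hxe0, hv0, Prod.norm_mk]
    gcongr
    exact max_le_add_of_nonneg (norm_nonneg _) (norm_nonneg _)

/-- With an exponentially stable closed-loop system, the controller solves
the output regulation problem iff the discrete-time regulator equations
`Σ S = A_e Σ + B_e`, `C_e Σ + D_e = 0` have a bounded solution `Σ : ℂ^q → X × Z`. -/
theorem orp_iff_regulator_equations
    {X Z U Ud Y : Type*}
    [NormedAddCommGroup X] [NormedSpace ℂ X] [CompleteSpace X]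
    [NormedAddCommGroup Z] [NormedSpace ℂ Z] [CompleteSpace Z]
    [NormedAddCommGroup U] [InnerProductSpace ℂ U] [CompleteSpace U]
    [NormedAddCommGroup Ud] [InnerProductSpace ℂ Ud] [CompleteSpace Ud]
    [NormedAddCommGroup Y] [InnerProductSpace ℂ Y] [CompleteSpace Y]
    (A : X →L[ℂ] X) (B : U →L[ℂ] X) (Bd : Ud →L[ℂ] X)
    (C : X →L[ℂ] Y) (D : U →L[ℂ] Y) (Dd : Ud →L[ℂ] Y)
    (q : ℕ) (μ : Fin q → ℂ) (hμ : ∀ k, ‖μ k‖ = 1)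
    (E : (Fin q → ℂ) →L[ℂ] Ud) (F : (Fin q → ℂ) →L[ℂ] Y)
    (G₁ : Z →L[ℂ] Z) (G₂ : Y →L[ℂ] Z) (K : Z →L[ℂ] U)
    (hCL : ∀ lam ∈ spectrum ℂ (Ae A B C D G₁ G₂ K), ‖lam‖ < 1) :
    SolvesORP A B Bd C D Dd
        (ContinuousLinearMap.pi fun k => μ k • ContinuousLinearMap.proj k) E F G₁ G₂ K
      ↔ ∃ Sig : (Fin q → ℂ) →L[ℂ] X × Z,
          Sig.comp (ContinuousLinearMap.pi fun k => μ k • ContinuousLinearMap.proj k)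
              = (Ae A B C D G₁ G₂ K).comp Sig + Be Bd Dd E F G₂
          ∧ (Ce C D K).comp Sig + De Dd E F = 0 :=
  orp_iff_regulator_equations_general A B Bd C D Dd q μ hμ E F G₁ G₂ K hCL
end
end

section
/- Assume 1 lies in the resolvent set of A. Let Y_N be a finite-dimensional subspace of Y with r = dim Y_N, let Q_N : Y → Y be a bounded projection (Q_N² = Q_N) with range Y_N, let G₂₀ : Y → ℂ^r be a bounded operator whose restriction to Y_N is a bijection onto ℂ^r, and set Z = ℂ^r, G₁ = I, G₂ = G₂₀ ∘ Q_N. Let K : ℂ^r → U be a bounded operator such that Q_N ∘ P(1) ∘ K : ℂ^r → Y_N is injective. Fix w ∈ U_d and y_ref ∈ Y and consider the one-dimensional exosystem with S = 1 ∈ ℂ, E v = v·w, F v = −v·y_ref. Assume 1 lies in the resolvent set of the closed-loop operator A_e. Then: (i) there is a unique z ∈ ℂ^r with Q_N(P(1) K z) = Q_N y_ref − Q_N(P_d(1) w); and (ii) the closed-loop transfer function at 1 satisfies (C_e (I − A_e)⁻¹ B_e + D_e)(1) = (I − Q_N)(P(1) K z + P_d(1) w − y_ref) in Y. -/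
noncomputable section

open ContinuousLinearMap

variable {X Z U Ud Y W : Type*}
  [NormedAddCommGroup X] [NormedSpace ℂ X]
  [NormedAddCommGroup Z] [NormedSpace ℂ Z]
  [NormedAddCommGroup U] [NormedSpace ℂ U]
  [NormedAddCommGroup Ud] [NormedSpace ℂ Ud]
  [NormedAddCommGroup Y] [NormedSpace ℂ Y]
  [NormedAddCommGroup W] [NormedSpace ℂ W]

/-- The transfer function `P(1) = C(I−A)⁻¹B + D` of the system at `μ = 1`. -/
def P1 (A : X →L[ℂ] X) (B : U →L[ℂ] X) (C : X →L[ℂ] Y) (D : U →L[ℂ] Y) : U →L[ℂ] Y :=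
  C.comp ((Ring.inverse ((1 : X →L[ℂ] X) - A)).comp B) + D

/-- The disturbance transfer function `P_d(1) = C(I−A)⁻¹B_d + D_d` at `μ = 1`. -/
def Pd1 (A : X →L[ℂ] X) (Bd : Ud →L[ℂ] X) (C : X →L[ℂ] Y) (Dd : Ud →L[ℂ] Y) :
    Ud →L[ℂ] Y :=
  C.comp ((Ring.inverse ((1 : X →L[ℂ] X) - A)).comp Bd) + Dd

/-!
Let `p = (x, z) = (I - A_e)⁻¹ B_e 1`. The first component of `(I - A_e) p = B_e 1` gives
`x = (I - A)⁻¹ (B K z + B_d w)`, so the closed-loop output `C_e p + D_e 1` is the regulation error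
`e = P(1) K z + P_d(1) w - y_ref`. Since `G₁ = I`, the controller state cancels from the second
component, which reduces to `G₂₀ (Q_N e) = 0`; injectivity of `G₂₀` on `Y_N` gives `Q_N e = 0`.
So `z` solves the equation of (i) and the output is `e = (I - Q_N) e`. Existence and uniqueness in
(i) hold because `Q_N P(1) K : ℂ^r → Y_N` is an injective linear map between spaces of dimension `r`.
-/

theorem isUnit_one_sub_of_one_mem_resolventSet {R A : Type*} [CommSemiring R] [Ring A]
    [Algebra R A] {a : A} (h : (1 : R) ∈ resolventSet R a) : IsUnit (1 - a) := by
  simpa using spectrum.mem_resolventSet_iff.mp h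

namespace ContinuousLinearMap

variable {R M : Type*} [Semiring R] [TopologicalSpace M] [AddCommMonoid M] [Module R M]
  {T : M →L[R] M}

theorem ringInverse_apply_self (hT : IsUnit T) (x : M) : Ring.inverse T (T x) = x := by
  rw [← mul_apply_eq_comp, Ring.inverse_mul_cancel _ hT, one_apply_eq_self]

theorem apply_ringInverse_apply (hT : IsUnit T) (y : M) : T (Ring.inverse T y) = y := by
  rw [← mul_apply_eq_comp, Ring.mul_inverse_cancel _ hT, one_apply_eq_self]

end ContinuousLinearMap

theorem LinearMap.existsUnique_eq_of_injective_of_finrank_eq {K V Y : Type*} [Field K]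
    [AddCommGroup V] [Module K V] [FiniteDimensional K V] [AddCommGroup Y] [Module K Y]
    {S : Submodule K Y} [FiniteDimensional K S] (f : V →ₗ[K] Y) (hfS : ∀ z, f z ∈ S)
    (hf : Function.Injective f) (hdim : Module.finrank K V = Module.finrank K S)
    {y : Y} (hy : y ∈ S) : ∃! z, f z = y := by
  have hsurj : Function.Surjective (f.codRestrict S hfS) :=
    (injective_iff_surjective_of_finrank_eq_finrank hdim).mp fun a b hab =>
      hf (congrArg Subtype.val hab)
  obtain ⟨z, hz⟩ := hsurj ⟨y, hy⟩
  exact ⟨z, congrArg Subtype.val hz, fun z' hz' => hf (hz'.trans (congrArg Subtype.val hz).symm)⟩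

section ClosedLoop

variable (A : X →L[ℂ] X) (B : U →L[ℂ] X) (Bd : Ud →L[ℂ] X) (C : X →L[ℂ] Y) (D : U →L[ℂ] Y)
  (Dd : Ud →L[ℂ] Y) (E : W →L[ℂ] Ud) (F : W →L[ℂ] Y) (G₁ : Z →L[ℂ] Z) (G₂ : Y →L[ℂ] Z)
  (K : Z →L[ℂ] U)

@[simp]
theorem Ae_apply_fst (p : X × Z) : (Ae A B C D G₁ G₂ K p).1 = A p.1 + B (K p.2) := rfl

@[simp]
theorem Ae_apply_snd (p : X × Z) :
    (Ae A B C D G₁ G₂ K p).2 = G₂ (C p.1) + G₁ p.2 + G₂ (D (K p.2)) := rfl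

@[simp]
theorem Be_apply (v : W) : Be Bd Dd E F G₂ v = (Bd (E v), G₂ (Dd (E v) + F v)) := rfl

@[simp]
theorem Ce_apply (p : X × Z) : Ce C D K p = C p.1 + D (K p.2) := rfl

@[simp]
theorem De_apply (v : W) : De Dd E F v = Dd (E v) + F v := rfl

variable {A B Bd C D Dd E F G₁ G₂ K} {p : X × Z} {v : W}

theorem fst_eq_of_one_sub_Ae_apply_eq_Be (hA : IsUnit (1 - A))
    (hp : (1 - Ae A B C D G₁ G₂ K) p = Be Bd Dd E F G₂ v) :
    p.1 = Ring.inverse (1 - A) (B (K p.2) + Bd (E v)) := by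
  have hx : (1 - A) p.1 = B (K p.2) + Bd (E v) := by
    have h := congrArg Prod.fst hp
    simp only [sub_apply, one_apply_eq_self, Prod.fst_sub, Ae_apply_fst, Be_apply] at h
    rw [sub_apply, one_apply_eq_self, ← h]
    abel
  rw [← hx, ringInverse_apply_self hA]

theorem Ce_add_De_eq_of_one_sub_Ae_apply_eq_Be (hA : IsUnit (1 - A))
    (hp : (1 - Ae A B C D G₁ G₂ K) p = Be Bd Dd E F G₂ v) :
    Ce C D K p + De Dd E F v = P1 A B C D (K p.2) + Pd1 A Bd C Dd (E v) + F v := by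
  rw [Ce_apply, De_apply, fst_eq_of_one_sub_Ae_apply_eq_Be hA hp]
  simp only [P1, Pd1, add_apply, comp_apply, map_add]
  abel

theorem map_Ce_add_De_eq_zero_of_one_sub_Ae_apply_eq_Be
    (hp : (1 - Ae A B C D 1 G₂ K) p = Be Bd Dd E F G₂ v) :
    G₂ (Ce C D K p + De Dd E F v) = 0 := by
  have h := congrArg Prod.snd hp
  simp only [sub_apply, one_apply_eq_self, Prod.snd_sub, Ae_apply_snd, Be_apply] at h
  rw [Ce_apply, De_apply, map_add, map_add, ← h]
  abel

end ClosedLoop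

theorem closed_loop_transfer_function_at_one_general
    {X U Ud Y : Type*}
    [NormedAddCommGroup X] [NormedSpace ℂ X]
    [NormedAddCommGroup U] [InnerProductSpace ℂ U]
    [NormedAddCommGroup Ud] [InnerProductSpace ℂ Ud]
    [NormedAddCommGroup Y] [InnerProductSpace ℂ Y]
    (A : X →L[ℂ] X) (B : U →L[ℂ] X) (Bd : Ud →L[ℂ] X)
    (C : X →L[ℂ] Y) (D : U →L[ℂ] Y) (Dd : Ud →L[ℂ] Y)
    (YN : Submodule ℂ Y) [FiniteDimensional ℂ YN]
    (r : ℕ) (hrank : Module.finrank ℂ YN = r)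
    (QN : Y →L[ℂ] Y) (hranQN : LinearMap.range (QN : Y →ₗ[ℂ] Y) = YN)
    (G₂₀ : Y →L[ℂ] EuclideanSpace ℂ (Fin r))
    (hbij : Function.Bijective fun y : YN => G₂₀ (y : Y))
    (K : EuclideanSpace ℂ (Fin r) →L[ℂ] U)
    (hinj : Function.Injective fun z : EuclideanSpace ℂ (Fin r) => QN (P1 A B C D (K z)))
    (w : Ud) (yref : Y)
    (hresA : (1 : ℂ) ∈ resolventSet ℂ A)
    (hresAe : (1 : ℂ) ∈ resolventSet ℂ
      (Ae A B C D (1 : EuclideanSpace ℂ (Fin r) →L[ℂ] EuclideanSpace ℂ (Fin r))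
        (G₂₀.comp QN) K)) :
    (∃! z : EuclideanSpace ℂ (Fin r),
        QN (P1 A B C D (K z)) = QN yref - QN (Pd1 A Bd C Dd w))
    ∧ ∀ z : EuclideanSpace ℂ (Fin r),
        QN (P1 A B C D (K z)) = QN yref - QN (Pd1 A Bd C Dd w) →
        Ce C D K
            (Ring.inverse
              ((1 : (X × EuclideanSpace ℂ (Fin r)) →L[ℂ] (X × EuclideanSpace ℂ (Fin r)))
                - Ae A B C D (1 : EuclideanSpace ℂ (Fin r) →L[ℂ] EuclideanSpace ℂ (Fin r))
                    (G₂₀.comp QN) K)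
              (Be Bd Dd (ContinuousLinearMap.toSpanSingleton ℂ w)
                (-(ContinuousLinearMap.toSpanSingleton ℂ yref)) (G₂₀.comp QN) (1 : ℂ)))
          + De Dd (ContinuousLinearMap.toSpanSingleton ℂ w)
              (-(ContinuousLinearMap.toSpanSingleton ℂ yref)) (1 : ℂ)
        = (P1 A B C D (K z) + Pd1 A Bd C Dd w - yref)
            - QN (P1 A B C D (K z) + Pd1 A Bd C Dd w - yref) := by
  have hmem : ∀ y, QN y ∈ YN := fun y => hranQN ▸ LinearMap.mem_range_self _ y
  have hsolve : ∀ y, ∃! z : EuclideanSpace ℂ (Fin r), QN (P1 A B C D (K z)) = QN y := fun y =>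
    LinearMap.existsUnique_eq_of_injective_of_finrank_eq (S := YN)
      ((QN : Y →ₗ[ℂ] Y) ∘ₗ (P1 A B C D : U →ₗ[ℂ] Y) ∘ₗ (K : EuclideanSpace ℂ (Fin r) →ₗ[ℂ] U))
      (fun _ => hmem _) hinj (by simp [hrank]) (hmem y)
  simp only [← map_sub]
  refine ⟨hsolve _, fun z hz => ?_⟩
  set p := Ring.inverse (1 - Ae A B C D 1 (G₂₀.comp QN) K)
    (Be Bd Dd (toSpanSingleton ℂ w) (-toSpanSingleton ℂ yref) (G₂₀.comp QN) 1)
  have hp : (1 - Ae A B C D 1 (G₂₀.comp QN) K) p =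
      Be Bd Dd (toSpanSingleton ℂ w) (-toSpanSingleton ℂ yref) (G₂₀.comp QN) 1 :=
    apply_ringInverse_apply (isUnit_one_sub_of_one_mem_resolventSet hresAe) _
  set e := P1 A B C D (K p.2) + Pd1 A Bd C Dd w - yref
  have herr : Ce C D K p + De Dd (toSpanSingleton ℂ w) (-toSpanSingleton ℂ yref) 1 = e := by
    rw [Ce_add_De_eq_of_one_sub_Ae_apply_eq_Be (isUnit_one_sub_of_one_mem_resolventSet hresA) hp]
    simp only [e, toSpanSingleton_apply, one_smul, neg_apply, sub_eq_add_neg]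
  have hQe : QN e = 0 := by
    have h := map_Ce_add_De_eq_zero_of_one_sub_Ae_apply_eq_Be hp
    rw [herr] at h
    exact congrArg Subtype.val (hbij.1 (a₁ := ⟨QN e, hmem e⟩) (a₂ := 0) (by simpa using h))
  have hp₂ : QN (P1 A B C D (K p.2)) = QN (yref - Pd1 A Bd C Dd w) := by
    rw [← sub_eq_zero, ← hQe]
    simp only [e, map_sub, map_add]
    abel
  obtain rfl : p.2 = z := (hsolve _).unique hp₂ hz
  rw [herr, hQe, sub_zero]

/-- computation of the closed-loop transfer function at `μ = 1` for the
controller `(I, G₂₀Q_N, K)` and one-dimensional exosystem `S = 1`, `E v = v w`,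
`F v = −v y_ref`: there is a unique `z ∈ ℂ^r` with
`Q_N P(1)Kz = Q_N y_ref − Q_N P_d(1)w`, and
`P_e(1)(1) = (I − Q_N)(P(1)Kz + P_d(1)w − y_ref)`. -/
theorem closed_loop_transfer_function_at_one
    {X U Ud Y : Type*}
    [NormedAddCommGroup X] [NormedSpace ℂ X] [CompleteSpace X]
    [NormedAddCommGroup U] [InnerProductSpace ℂ U] [CompleteSpace U]
    [NormedAddCommGroup Ud] [InnerProductSpace ℂ Ud] [CompleteSpace Ud]
    [NormedAddCommGroup Y] [InnerProductSpace ℂ Y] [CompleteSpace Y]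
    (A : X →L[ℂ] X) (B : U →L[ℂ] X) (Bd : Ud →L[ℂ] X)
    (C : X →L[ℂ] Y) (D : U →L[ℂ] Y) (Dd : Ud →L[ℂ] Y)
    (YN : Submodule ℂ Y) [FiniteDimensional ℂ YN]
    (r : ℕ) (hrank : Module.finrank ℂ YN = r)
    (QN : Y →L[ℂ] Y) (hproj : QN.comp QN = QN) (hranQN : LinearMap.range (QN : Y →ₗ[ℂ] Y) = YN)
    (G₂₀ : Y →L[ℂ] EuclideanSpace ℂ (Fin r))
    (hbij : Function.Bijective fun y : YN => G₂₀ (y : Y))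
    (K : EuclideanSpace ℂ (Fin r) →L[ℂ] U)
    (hinj : Function.Injective fun z : EuclideanSpace ℂ (Fin r) => QN (P1 A B C D (K z)))
    (w : Ud) (yref : Y)
    (hresA : (1 : ℂ) ∈ resolventSet ℂ A)
    (hresAe : (1 : ℂ) ∈ resolventSet ℂ
      (Ae A B C D (1 : EuclideanSpace ℂ (Fin r) →L[ℂ] EuclideanSpace ℂ (Fin r))
        (G₂₀.comp QN) K)) :
    (∃! z : EuclideanSpace ℂ (Fin r),
        QN (P1 A B C D (K z)) = QN yref - QN (Pd1 A Bd C Dd w))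
    ∧ ∀ z : EuclideanSpace ℂ (Fin r),
        QN (P1 A B C D (K z)) = QN yref - QN (Pd1 A Bd C Dd w) →
        Ce C D K
            (Ring.inverse
              ((1 : (X × EuclideanSpace ℂ (Fin r)) →L[ℂ] (X × EuclideanSpace ℂ (Fin r)))
                - Ae A B C D (1 : EuclideanSpace ℂ (Fin r) →L[ℂ] EuclideanSpace ℂ (Fin r))
                    (G₂₀.comp QN) K)
              (Be Bd Dd (ContinuousLinearMap.toSpanSingleton ℂ w)
                (-(ContinuousLinearMap.toSpanSingleton ℂ yref)) (G₂₀.comp QN) (1 : ℂ)))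
          + De Dd (ContinuousLinearMap.toSpanSingleton ℂ w)
              (-(ContinuousLinearMap.toSpanSingleton ℂ yref)) (1 : ℂ)
        = (P1 A B C D (K z) + Pd1 A Bd C Dd w - yref)
            - QN (P1 A B C D (K z) + Pd1 A Bd C Dd w - yref) :=
  closed_loop_transfer_function_at_one_general A B Bd C D Dd YN r hrank QN hranQN G₂₀ hbij K hinj w
    yref hresA hresAe
end
end
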